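/- arXiv:2006.15384 — 4 statements merged into one kernel-verified Lean document; each statement's English description precedes it below -/
import Mathlib

section
/- Let w : ZMod N_tot → α be injective, and let P1 and P2 be resampled paths of length N with index functions c1, c2 admitting decision sets D1 and D2 respectively. Then P1 = P2 as functions on Fin N if and only if P1 i = P2 i for every i ∈ D1 ∪ D2 (Lemma A.1: two block-resampled paths are identical if and only if they agree at every index of the combined decision index list). -/
/-- **Lemma A.1** (circular data model).  Two block-resampled paths are identical
if and only if they agree at every index of the combined decision index list. -/
theorem stmt0 {N N_tot : ℕ} [NeZero N] {α : Type*}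
    (w : ZMod N_tot → α) (hw : Function.Injective w)
    (c1 c2 : Fin N → ZMod N_tot)
    (D1 D2 : Set (Fin N))
    (hD1 : (0 : Fin N) ∈ D1) (hD2 : (0 : Fin N) ∈ D2)
    (h1 : ∀ i : Fin N, i ≠ 0 → i ∉ D1 → c1 i = c1 (i - 1) + 1)
    (h2 : ∀ i : Fin N, i ≠ 0 → i ∉ D2 → c2 i = c2 (i - 1) + 1) :
    (fun i : Fin N => w (c1 i)) = (fun i : Fin N => w (c2 i)) ↔
      ∀ i ∈ D1 ∪ D2, w (c1 i) = w (c2 i) := by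
  constructor
  · intro h i _
    exact congrFun h i
  · intro h
    funext i
    have key : ∀ n : ℕ, ∀ i : Fin N, i.val = n → c1 i = c2 i := by
      intro n
      induction n using Nat.strong_induction_on with
      | _ n ih =>
        intro i hi
        by_cases hD : i ∈ D1 ∪ D2
        · exact hw (h i hD)
        · have hne : i ≠ 0 := by
            intro h0
            exact hD (Or.inl (h0 ▸ hD1))
          have hlt : (i - 1).val < i.val := by
            have h0 : i.val ≠ 0 := fun h0 => hne (Fin.ext h0)
            obtain ⟨M, rfl⟩ := Nat.exists_eq_succ_of_ne_zero (NeZero.ne N)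
            exact Fin.sub_one_lt_iff.mpr (Fin.pos_of_ne_zero hne)
          have hprev : c1 (i - 1) = c2 (i - 1) :=
            ih (i - 1).val (hi ▸ hlt) (i - 1) rfl
          rw [h1 i hne (fun hm => hD (Or.inl hm)),
              h2 i hne (fun hm => hD (Or.inr hm)), hprev]
    rw [key i.val i rfl]
end

section
/- Let b1 and b2 be positive divisors of N, and let P1 and P2 be independent fixed-block bootstrap paths of length N with blocksizes b1 and b2 respectively, i.e., all N/b1 + N/b2 block starting indices are independent and uniformly distributed on ZMod N_tot. Then the probability that P1 = P2 equals (1/N_tot)^m, where m is the cardinality of the combined decision index set {i ∈ Fin N : b1 ∣ i} ∪ {i ∈ Fin N : b2 ∣ i}. -/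
open MeasureTheory

/-- The fixed-block bootstrap path of length `N` with blocksize `b ∣ N`,
built from the circular data sequence `w : ZMod N_tot → α` with starting
indices `s : Fin (N/b) → ZMod N_tot`:  position `i` holds the observation
`w (s ⌊i/b⌋ + (i mod b))`. -/
def fixedBlockPath {N N_tot : ℕ} {α : Type*} (w : ZMod N_tot → α)
    (b : ℕ) (hbN : b ∣ N) (s : Fin (N / b) → ZMod N_tot) (i : Fin N) : α :=
  w (s ⟨i.val / b, Nat.div_lt_div_of_lt_of_dvd hbN i.isLt⟩ + (i.val % b : ZMod N_tot))

/-!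
Since `w` is injective, two paths agree iff their index functions agree. The index functions of
blocksize `b` are exactly the maps `c : Fin N → ZMod N_tot` with `c (i + 1) = c i + 1` whenever
`b ∤ i + 1`, and each of them determines its starting indices. Imposing this local condition for
`b1` and for `b2` is imposing it for `lcm b1 b2`, so coinciding pairs correspond to the
`N_tot ^ (N / lcm b1 b2)` index functions of blocksize `lcm b1 b2`; by inclusion–exclusion
`m = N / b1 + N / b2 - N / lcm b1 b2`.
-/

theorem Nat.add_one_mod_of_not_dvd {b n : ℕ} (h : ¬ b ∣ n + 1) : (n + 1) % b = n % b + 1 := by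
  have := Nat.div_add_mod (n + 1) b
  have := Nat.div_add_mod n b
  rw [Nat.succ_div_of_not_dvd h] at *
  omega

theorem Nat.mul_lt_of_lt_div_of_dvd {b N k : ℕ} (hb : b ∣ N) (hk : k < N / b) : k * b < N :=
  mul_comm b k ▸ (Nat.lt_div_iff_mul_lt' hb k).1 hk

theorem Nat.card_pullback_of_injective {X Y Z : Type*} {f : X → Y} {g : Z → Y}
    (hf : f.Injective) (hg : g.Injective) :
    Nat.card (f.Pullback g) = Nat.card ↥(Set.range f ∩ Set.range g) := by
  refine Nat.card_congr (Equiv.ofBijective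
    (fun p => ⟨f p.1.1, ⟨p.1.1, rfl⟩, ⟨p.1.2, p.2.symm⟩⟩) ⟨?_, ?_⟩)
  · rintro ⟨⟨x, z⟩, hxz⟩ ⟨⟨x', z'⟩, hxz'⟩ h
    have hx : x = x' := hf (congrArg Subtype.val h)
    subst hx
    exact Subtype.ext (Prod.ext rfl (hg (hxz.symm.trans hxz')))
  · rintro ⟨y, ⟨x, rfl⟩, ⟨z, hz⟩⟩
    exact ⟨⟨(x, z), hz.symm⟩, rfl⟩

namespace FixedBlockBootstrap

variable {N : ℕ} {R : Type*} [AddMonoidWithOne R] {b : ℕ}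

-- The index function of a fixed-block path: `fixedBlockPath w b hb s = w ∘ blockIndex b hb s`
-- holds definitionally.
def blockIndex (b : ℕ) (hb : b ∣ N) (s : Fin (N / b) → R) (i : Fin N) : R :=
  s ⟨i / b, Nat.div_lt_div_of_lt_of_dvd hb i.isLt⟩ + ((i.val % b : ℕ) : R)

theorem blockIndex_mul (hb0 : 0 < b) (hb : b ∣ N) (s : Fin (N / b) → R) (k : Fin (N / b)) :
    blockIndex b hb s ⟨k * b, Nat.mul_lt_of_lt_div_of_dvd hb k.isLt⟩ = s k := by
  simp [blockIndex, Nat.mul_div_cancel _ hb0]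

theorem blockIndex_injective (hb : b ∣ N) : (blockIndex (R := R) b hb).Injective := by
  rcases Nat.eq_zero_or_pos b with rfl | hb0
  · exact fun s s' _ => funext fun k => absurd k.isLt (by simp)
  · exact fun s s' h => funext fun k => by
      rw [← blockIndex_mul hb0 hb s k, ← blockIndex_mul hb0 hb s' k, h]

def IncrementsOffMultiples (b : ℕ) (c : Fin N → R) : Prop :=
  ∀ (i : ℕ) (hi : i + 1 < N), ¬ b ∣ i + 1 → c ⟨i + 1, hi⟩ = c ⟨i, by omega⟩ + 1

theorem incrementsOffMultiples_blockIndex (hb : b ∣ N) (s : Fin (N / b) → R) :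
    IncrementsOffMultiples b (blockIndex b hb s) := by
  intro i hi hdvd
  simp only [blockIndex, Nat.succ_div_of_not_dvd hdvd, Nat.add_one_mod_of_not_dvd hdvd,
    Nat.cast_succ, add_assoc]

theorem eq_blockIndex_of_incrementsOffMultiples (hb : b ∣ N) {c : Fin N → R}
    (hc : IncrementsOffMultiples b c) :
    c = blockIndex b hb fun k => c ⟨k * b, Nat.mul_lt_of_lt_div_of_dvd hb k.isLt⟩ := by
  suffices ∀ (i : ℕ) (hi : i < N),
      c ⟨i, hi⟩ = c ⟨i / b * b, (Nat.div_mul_le_self i b).trans_lt hi⟩ + ((i % b : ℕ) : R) from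
    funext fun i => this i i.isLt
  intro i
  induction i with
  | zero => simp
  | succ i ih =>
    intro hi
    by_cases hdvd : b ∣ i + 1
    · simp [Nat.div_mul_cancel hdvd, Nat.mod_eq_zero_of_dvd hdvd]
    · rw [hc i hi hdvd, ih (by omega)]
      simp only [Nat.succ_div_of_not_dvd hdvd, Nat.add_one_mod_of_not_dvd hdvd, Nat.cast_succ,
        add_assoc]

theorem range_blockIndex (hb : b ∣ N) :
    Set.range (blockIndex (R := R) b hb) = {c | IncrementsOffMultiples b c} :=
  Set.ext fun _ => ⟨fun ⟨s, hs⟩ => hs ▸ incrementsOffMultiples_blockIndex hb s,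
    fun hc => ⟨_, (eq_blockIndex_of_incrementsOffMultiples hb hc).symm⟩⟩

theorem incrementsOffMultiples_lcm_iff {b₁ b₂ : ℕ} {c : Fin N → R} :
    IncrementsOffMultiples (Nat.lcm b₁ b₂) c ↔
      IncrementsOffMultiples b₁ c ∧ IncrementsOffMultiples b₂ c := by
  simp only [IncrementsOffMultiples, Nat.lcm_dvd_iff, not_and_or]
  exact ⟨fun h => ⟨fun i hi h₁ => h i hi (.inl h₁), fun i hi h₂ => h i hi (.inr h₂)⟩,
    fun h i hi => Or.rec (h.1 i hi) (h.2 i hi)⟩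

theorem range_blockIndex_lcm {b₁ b₂ : ℕ} (h₁ : b₁ ∣ N) (h₂ : b₂ ∣ N) :
    Set.range (blockIndex (R := R) (Nat.lcm b₁ b₂) (Nat.lcm_dvd h₁ h₂)) =
      Set.range (blockIndex b₁ h₁) ∩ Set.range (blockIndex b₂ h₂) := by
  simp only [range_blockIndex, ← Set.ofPred_and, incrementsOffMultiples_lcm_iff]

theorem card_pullback_blockIndex {b₁ b₂ : ℕ} (h₁ : b₁ ∣ N) (h₂ : b₂ ∣ N) :
    Nat.card ((blockIndex (R := R) b₁ h₁).Pullback (blockIndex b₂ h₂)) =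
      Nat.card (Fin (N / Nat.lcm b₁ b₂) → R) := by
  rw [Nat.card_pullback_of_injective (blockIndex_injective h₁) (blockIndex_injective h₂),
    ← range_blockIndex_lcm h₁ h₂, Nat.card_range_of_injective (blockIndex_injective _)]

end FixedBlockBootstrap

open Finset in
theorem Fin.card_filter_dvd {N d : ℕ} (hd : d ∣ N) : #{i : Fin N | d ∣ i.val} = N / d := by
  rcases Nat.eq_zero_or_pos d with rfl | hd0
  · obtain rfl := Nat.eq_zero_of_zero_dvd hd
    rfl
  rw [← Fintype.card_fin (N / d), ← card_univ]
  refine card_bij' (fun i _ => ⟨i / d, Nat.div_lt_div_of_lt_of_dvd hd i.isLt⟩)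
    (fun k _ => ⟨k * d, Nat.mul_lt_of_lt_div_of_dvd hd k.isLt⟩) (by simp) (by simp) ?_ ?_
  · intro i hi
    exact Fin.ext (Nat.div_mul_cancel (mem_filter.1 hi).2)
  · intro k _
    exact Fin.ext (Nat.mul_div_cancel _ hd0)

open Finset in
theorem Fin.card_filter_dvd_or_dvd_add {N b₁ b₂ : ℕ} (h₁ : b₁ ∣ N) (h₂ : b₂ ∣ N) :
    #{i : Fin N | b₁ ∣ i.val ∨ b₂ ∣ i.val} + N / Nat.lcm b₁ b₂ = N / b₁ + N / b₂ := by
  rw [← card_filter_dvd (Nat.lcm_dvd h₁ h₂), ← card_filter_dvd h₁, ← card_filter_dvd h₂,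
    ← card_union_add_card_inter (s := {i : Fin N | b₁ ∣ i.val}), ← filter_or, ← filter_and]
  simp only [Nat.lcm_dvd_iff]

theorem ENNReal.pow_div_pow_add {a : ENNReal} (h0 : a ≠ 0) (ht : a ≠ ⊤) (m k : ℕ) :
    a ^ k / a ^ (m + k) = a⁻¹ ^ m := by
  rw [pow_add, ENNReal.div_eq_inv_mul, ENNReal.mul_inv (by simp [h0]) (by simp [ht]), mul_assoc,
    ENNReal.inv_mul_cancel (by simp [h0]) (by simp [ht]), mul_one, ENNReal.inv_pow]

open FixedBlockBootstrap in
theorem stmt1_general {N N_tot : ℕ} [NeZero N_tot] {α : Type*}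
    (w : ZMod N_tot → α) (hw : Function.Injective w)
    (b1 b2 : ℕ) (h1 : b1 ∣ N) (h2 : b2 ∣ N) :
    (PMF.uniformOfFintype
        ((Fin (N / b1) → ZMod N_tot) × (Fin (N / b2) → ZMod N_tot))).toMeasure
      {s | fixedBlockPath w b1 h1 s.1 = fixedBlockPath w b2 h2 s.2}
      = ((N_tot : ENNReal)⁻¹) ^
          (Finset.univ.filter (fun i : Fin N => b1 ∣ i.val ∨ b2 ∣ i.val)).card := by
  classical
  set S := {s : (Fin (N / b1) → ZMod N_tot) × (Fin (N / b2) → ZMod N_tot) |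
    fixedBlockPath w b1 h1 s.1 = fixedBlockPath w b2 h2 s.2}
  have hS : Nat.card S = N_tot ^ (N / Nat.lcm b1 b2) := by
    calc Nat.card S = Nat.card ((blockIndex b1 h1).Pullback (blockIndex b2 h2)) :=
          Nat.card_congr (Equiv.subtypeEquivRight fun _ => hw.comp_left.eq_iff)
      _ = N_tot ^ (N / Nat.lcm b1 b2) := by
          rw [card_pullback_blockIndex, Nat.card_fun, Nat.card_zmod, Nat.card_fin]
  rw [PMF.toMeasure_uniformOfFintype_apply S (Set.to_countable S).measurableSet,
    Fintype.card_eq_nat_card, Fintype.card_eq_nat_card, hS, Nat.card_prod, Nat.card_fun,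
    Nat.card_fun, Nat.card_zmod, Nat.card_fin, Nat.card_fin, ← pow_add,
    ← Fin.card_filter_dvd_or_dvd_add h1 h2]
  push_cast
  exact ENNReal.pow_div_pow_add (by simp [NeZero.ne]) (by simp) _ _

/-- Two independent fixed-block bootstrap paths of length `N` with blocksizes
`b1, b2 ∣ N` (all `N/b1 + N/b2` block starting indices i.i.d. uniform on
`ZMod N_tot`) are identical with probability `(1/N_tot)^m`, where `m` is the
cardinality of the combined decision index set
`{i : b1 ∣ i} ∪ {i : b2 ∣ i} ⊆ Fin N`. -/
theorem stmt1 {N N_tot : ℕ} [NeZero N] [NeZero N_tot] {α : Type*}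
    (w : ZMod N_tot → α) (hw : Function.Injective w)
    (b1 b2 : ℕ) (hb1 : 0 < b1) (hb2 : 0 < b2) (h1 : b1 ∣ N) (h2 : b2 ∣ N) :
    (PMF.uniformOfFintype
        ((Fin (N / b1) → ZMod N_tot) × (Fin (N / b2) → ZMod N_tot))).toMeasure
      {s | fixedBlockPath w b1 h1 s.1 = fixedBlockPath w b2 h2 s.2}
      = ((N_tot : ENNReal)⁻¹) ^
          (Finset.univ.filter (fun i : Fin N => b1 ∣ i.val ∨ b2 ∣ i.val)).card :=
  stmt1_general w hw b1 b2 h1 h2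
end

section
/- (Theorem 1.) Let b1 and b2 be positive divisors of N such that one of b1, b2 divides the other. Let P1 and P2 be independent fixed-block bootstrap paths of length N from an injective circular data sequence of N_tot distinct observations, with fixed blocksizes b1 and b2 respectively (all block starting indices i.i.d. uniform on ZMod N_tot). Then the probability that P1 and P2 are identical is (1/N_tot)^{lcm(N/b1, N/b2)}, where lcm(a, b) is the least common multiple of the integers a and b. -/
open MeasureTheory

/-! When `b1 ∣ b2`, a fixed-block path with blocksize `b2` is also one with blocksize `b1`,
whose starting indices are read off from the `b2`-starts (`subblockStarts`). Since `w` is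
injective, a fixed-block path determines its starting indices, so the two paths agree exactly
on the graph of a function of the `b2`-starts. Under the uniform law this event has probability
`N_tot ^ (-(N / b1))`, and `N / b1 = lcm (N / b1) (N / b2)`. -/

namespace PMF

variable {A B : Type*} [Fintype A] [Fintype B] [Nonempty A] [Nonempty B]

theorem toMeasure_uniformOfFintype_prod_graph [MeasurableSpace (A × B)]
    [DiscreteMeasurableSpace (A × B)] (F : B → A) :
    (uniformOfFintype (A × B)).toMeasure {p | p.1 = F p.2} =
      (Fintype.card A : ENNReal)⁻¹ := by
  classical
  let graphEquiv : {p : A × B | p.1 = F p.2} ≃ B :=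
    ⟨fun p => p.1.2, fun b => ⟨(F b, b), rfl⟩,
      fun ⟨_, h⟩ => Subtype.ext (Prod.ext h.symm rfl), fun _ => rfl⟩
  have hB : (Fintype.card B : ENNReal) ≠ 0 := by simp
  rw [toMeasure_uniformOfFintype_apply _ MeasurableSet.of_discrete,
    Fintype.card_congr graphEquiv, Fintype.card_prod, Nat.cast_mul, ENNReal.div_eq_inv_mul,
    ENNReal.mul_inv (Or.inr (ENNReal.natCast_ne_top _)) (Or.inr hB), mul_assoc,
    ENNReal.inv_mul_cancel hB (ENNReal.natCast_ne_top _), mul_one]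

theorem toMeasure_uniformOfFintype_prod_swap [MeasurableSpace (A × B)]
    [DiscreteMeasurableSpace (A × B)] [MeasurableSpace (B × A)] [DiscreteMeasurableSpace (B × A)]
    (S : Set (B × A)) :
    (uniformOfFintype (A × B)).toMeasure (Prod.swap ⁻¹' S) =
      (uniformOfFintype (B × A)).toMeasure S := by
  classical
  rw [toMeasure_uniformOfFintype_apply _ MeasurableSet.of_discrete,
    toMeasure_uniformOfFintype_apply _ MeasurableSet.of_discrete,
    Fintype.card_congr
      ((Equiv.prodComm A B).subtypeEquiv fun _ => Iff.rfl : Prod.swap ⁻¹' S ≃ S),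
    Fintype.card_congr (Equiv.prodComm A B)]

end PMF

theorem Nat.mul_div_div_of_dvd {b1 b2 : ℕ} (hb1 : 0 < b1) (hd : b1 ∣ b2) (i : ℕ) :
    b1 * (i / b1) / b2 = i / b2 := by
  obtain ⟨k, rfl⟩ := hd
  rw [Nat.mul_div_mul_left _ _ hb1, Nat.div_div_eq_div_mul]

theorem Nat.mul_div_mod_add_mod {b1 b2 : ℕ} (hd : b1 ∣ b2) (i : ℕ) :
    b1 * (i / b1) % b2 + i % b1 = i % b2 := by
  obtain ⟨k, rfl⟩ := hd
  rw [Nat.mul_mod_mul_left, Nat.mod_mul, add_comm]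

section FixedBlock

variable {N N_tot : ℕ} {α : Type*} {b1 b2 : ℕ}

theorem fixedBlockPath_injective {w : ZMod N_tot → α} (hw : Function.Injective w) {b : ℕ}
    (hb : b ∣ N) : Function.Injective (fixedBlockPath w b hb) := by
  intro s s' h
  funext j
  have hbpos : 0 < b := Nat.pos_of_ne_zero fun hb0 => by simpa [hb0] using j.pos
  have hjN : b * j.val < N := (Nat.lt_div_iff_mul_lt' hb _).mp j.isLt
  simpa [fixedBlockPath, Nat.mul_div_cancel_left _ hbpos] using hw (congrFun h ⟨_, hjN⟩)

def subblockStarts (h1 : b1 ∣ N) (h2 : b2 ∣ N) (s : Fin (N / b2) → ZMod N_tot) :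
    Fin (N / b1) → ZMod N_tot := fun j =>
  s ⟨b1 * j.val / b2, Nat.div_lt_div_of_lt_of_dvd h2 ((Nat.lt_div_iff_mul_lt' h1 _).mp j.isLt)⟩
    + ((b1 * j.val % b2 : ℕ) : ZMod N_tot)

theorem fixedBlockPath_subblockStarts (w : ZMod N_tot → α) (h1 : b1 ∣ N) (h2 : b2 ∣ N)
    (hd : b1 ∣ b2) (s : Fin (N / b2) → ZMod N_tot) :
    fixedBlockPath w b1 h1 (subblockStarts h1 h2 s) = fixedBlockPath w b2 h2 s := by
  funext i
  have hb1 : 0 < b1 := Nat.pos_of_dvd_of_pos h1 i.pos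
  simp only [fixedBlockPath, subblockStarts, add_assoc, ← Nat.cast_add,
    Nat.mul_div_mod_add_mod hd, Nat.mul_div_div_of_dvd hb1 hd]

theorem fixedBlockPath_eq_iff {w : ZMod N_tot → α} (hw : Function.Injective w)
    (h1 : b1 ∣ N) (h2 : b2 ∣ N) (hd : b1 ∣ b2)
    (s1 : Fin (N / b1) → ZMod N_tot) (s2 : Fin (N / b2) → ZMod N_tot) :
    fixedBlockPath w b1 h1 s1 = fixedBlockPath w b2 h2 s2 ↔ s1 = subblockStarts h1 h2 s2 := by
  rw [← fixedBlockPath_subblockStarts w h1 h2 hd, (fixedBlockPath_injective hw h1).eq_iff]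

end FixedBlock

theorem stmt3_general {N N_tot : ℕ} [NeZero N_tot] {α : Type*}
    (w : ZMod N_tot → α) (hw : Function.Injective w)
    (b1 b2 : ℕ) (h1 : b1 ∣ N) (h2 : b2 ∣ N)
    (hdvd : b1 ∣ b2 ∨ b2 ∣ b1) :
    (PMF.uniformOfFintype
        ((Fin (N / b1) → ZMod N_tot) × (Fin (N / b2) → ZMod N_tot))).toMeasure
      {s | fixedBlockPath w b1 h1 s.1 = fixedBlockPath w b2 h2 s.2}
      = ((N_tot : ENNReal)⁻¹) ^ Nat.lcm (N / b1) (N / b2) := by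
  wlog hd : b1 ∣ b2 generalizing b1 b2
  · rw [Nat.lcm_comm, ← this b2 b1 h2 h1 hdvd.symm (hdvd.resolve_left hd),
      ← PMF.toMeasure_uniformOfFintype_prod_swap]
    exact congrArg _ (Set.ext fun _ => eq_comm)
  have hgraph : {s : (Fin (N / b1) → ZMod N_tot) × (Fin (N / b2) → ZMod N_tot) |
      fixedBlockPath w b1 h1 s.1 = fixedBlockPath w b2 h2 s.2}
      = {s | s.1 = subblockStarts h1 h2 s.2} :=
    Set.ext fun s => fixedBlockPath_eq_iff hw h1 h2 hd s.1 s.2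
  rw [hgraph, PMF.toMeasure_uniformOfFintype_prod_graph, Fintype.card_fun, ZMod.card,
    Fintype.card_fin, Nat.div_lcm_eq_div_gcd h1 h2, Nat.gcd_eq_left hd, Nat.cast_pow,
    ENNReal.inv_pow]

/-- **Theorem 1.**  Let `b1, b2` be positive divisors of `N`, one dividing the other.
Two independent fixed-block bootstrap paths of length `N` from an injective circular
data sequence of `N_tot` distinct observations, with fixed blocksizes `b1` and `b2`
(all block starting indices i.i.d. uniform on `ZMod N_tot`), are identical with
probability `(1/N_tot)^(lcm (N/b1) (N/b2))`. -/
theorem stmt3 {N N_tot : ℕ} [NeZero N] [NeZero N_tot] {α : Type*}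
    (w : ZMod N_tot → α) (hw : Function.Injective w)
    (b1 b2 : ℕ) (hb1 : 0 < b1) (hb2 : 0 < b2) (h1 : b1 ∣ N) (h2 : b2 ∣ N)
    (hdvd : b1 ∣ b2 ∨ b2 ∣ b1) :
    (PMF.uniformOfFintype
        ((Fin (N / b1) → ZMod N_tot) × (Fin (N / b2) → ZMod N_tot))).toMeasure
      {s | fixedBlockPath w b1 h1 s.1 = fixedBlockPath w b2 h2 s.2}
      = ((N_tot : ENNReal)⁻¹) ^ Nat.lcm (N / b1) (N / b2) :=
  stmt3_general w hw b1 b2 h1 h2 hdvd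
end

section
/- Let p1, p2 ∈ (0,1] and let D1 and D2 be the random decision sets of two independent stationary block bootstrap paths of length N with parameters p1 and p2 respectively. Then for every integer 1 ≤ k ≤ N, the probability that |D1 ∪ D2| = k equals C(N−1, k−1) · (1 − (1−p1)(1−p2))^{k−1} · ((1−p1)(1−p2))^{N−k}, where C(n, r) is the binomial coefficient. Equivalently, for 0 < p1, p2 < 1, writing λ_i = −log(1−p_i), this probability equals C(N−1, k−1) e^{−(λ1+λ2)(N−1)} (e^{λ1+λ2} − 1)^{k−1}. -/
/-!
The union of the two decision sets is the decision set of the pointwise `or` of the two Bernoulli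
sequences, so its cardinality is one more than the number of `true`s in that sequence. Since the
coordinates are independent, the pointwise `or` of independent `Bernoulli(p1)` and `Bernoulli(p2)`
sequences is an i.i.d. `Bernoulli(1 - (1 - p1)(1 - p2))` sequence, whose number of `true`s is
binomial. The exponential form is the substitution `1 - pᵢ = exp (-λᵢ)`.
-/

open MeasureTheory

/-- Given the i.i.d. Bernoulli draws `d : Fin (N-1) → Bool` of a stationary block
bootstrap path of length `N`, the decision indicator of position `i : Fin N`:
position `0` is always a decision index, and position `i ≥ 1` is a decision index
iff `d_i = 1` (i.e. `d ⟨i-1, _⟩ = true`). -/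
def decisionIndicator {N : ℕ} (d : Fin (N - 1) → Bool) (i : Fin N) : Bool :=
  if h : i.val = 0 then true else d ⟨i.val - 1, by have := i.isLt; omega⟩

/-- The random decision set `D = {0} ∪ {i ≥ 1 : d_i = 1}` of a stationary block
bootstrap path of length `N`. -/
def decisionSet {N : ℕ} (d : Fin (N - 1) → Bool) : Finset (Fin N) :=
  Finset.univ.filter (fun i => decisionIndicator d i = true)

open Finset
open scoped ENNReal NNReal
set_option linter.deprecated false

lemma decisionSet_union {N : ℕ} (f g : Fin (N - 1) → Bool) :
    decisionSet f ∪ decisionSet g = decisionSet (fun j => f j || g j) := by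
  ext i
  by_cases hi : i.val = 0 <;> simp [decisionSet, decisionIndicator, hi]

lemma card_decisionSet {N : ℕ} [NeZero N] (d : Fin (N - 1) → Bool) :
    #(decisionSet d) = #{j | d j = true} + 1 := by
  obtain ⟨n, rfl⟩ := Nat.exists_eq_succ_of_ne_zero (NeZero.ne N)
  simp [decisionSet, decisionIndicator, Fin.card_filter_univ_succ]

theorem MeasureTheory.Measure.pi_prod_pi_map_zipWith {ι α β γ : Type*} [Fintype ι]
    [MeasurableSpace α] [MeasurableSpace β] [MeasurableSpace γ]
    (μ : ι → Measure α) (ν : ι → Measure β)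
    [∀ i, IsFiniteMeasure (μ i)] [∀ i, IsFiniteMeasure (ν i)] {f : α → β → γ}
    (hf : Measurable fun x : α × β => f x.1 x.2) :
    ((Measure.pi μ).prod (Measure.pi ν)).map (fun x i => f (x.1 i) (x.2 i))
      = Measure.pi fun i => ((μ i).prod (ν i)).map fun x => f x.1 x.2 := by
  rw [← (measurePreserving_arrowProdEquivProdArrow α β ι μ ν).map_eq,
    Measure.map_map (by fun_prop) (MeasurableEquiv.measurable _)]
  exact Measure.pi_map_pi fun _ => hf.aemeasurable

theorem PMF.bernoulli_prod_map_or {p q : ℝ≥0} (hp : p ≤ 1) (hq : q ≤ 1) :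
    ((bernoulli p hp).toMeasure.prod (bernoulli q hq).toMeasure).map (fun x => x.1 || x.2)
      = (bernoulli (1 - (1 - p) * (1 - q)) tsub_le_self).toMeasure := by
  set μ := ((bernoulli p hp).toMeasure.prod (bernoulli q hq).toMeasure).map (fun x => x.1 || x.2)
  have hpq : (1 - p) * (1 - q) ≤ 1 := mul_le_one' tsub_le_self tsub_le_self
  have hfalse :
      μ {false} = (bernoulli (1 - (1 - p) * (1 - q)) tsub_le_self).toMeasure {false} := by
    have hpre : (fun x : Bool × Bool => x.1 || x.2) ⁻¹' {false} = {false} ×ˢ {false} := by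
      ext ⟨a, b⟩; simp
    rw [Measure.map_apply (by fun_prop) (measurableSet_singleton _), hpre, Measure.prod_prod]
    simp only [toMeasure_apply_singleton _ _ (measurableSet_singleton _), bernoulli_apply,
      cond_false, tsub_tsub_cancel_of_le hpq]
    rw [ENNReal.coe_mul, ENNReal.coe_sub, ENNReal.coe_sub, ENNReal.coe_one]
  have : IsProbabilityMeasure μ := Measure.isProbabilityMeasure_map (by fun_prop)
  refine Measure.ext_of_singleton fun b => ?_
  cases b
  · exact hfalse
  · have htrue : ({true} : Set Bool) = {false}ᶜ := by ext b; simp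
    rw [htrue, prob_compl_eq_one_sub (measurableSet_singleton _),
      prob_compl_eq_one_sub (measurableSet_singleton _), hfalse]

theorem Fintype.card_filter_count_true_eq_choose (ι : Type*) [Fintype ι] [DecidableEq ι]
    (m : ℕ) :
    #{h : ι → Bool | #{j | h j = true} = m} = (Fintype.card ι).choose m := by
  rw [← card_univ, ← card_powersetCard]
  refine card_nbij' (fun h => ({j | h j = true} : Finset ι)) (fun s j => decide (j ∈ s))
    ?_ ?_ ?_ ?_ <;> intro x hx
  · simpa using hx
  · simp_all [mem_powersetCard]
  · funext j; simp
  · ext j; simp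

theorem PMF.pi_bernoulli_card_filter_eq {ι : Type*} [Fintype ι] [DecidableEq ι] {q : ℝ≥0}
    (hq : q ≤ 1) (m : ℕ) :
    Measure.pi (fun _ : ι => (bernoulli q hq).toMeasure) {h | #{j | h j = true} = m}
      = ENNReal.ofReal ((Fintype.card ι).choose m * q ^ m * (1 - q) ^ (Fintype.card ι - m)) := by
  have hsingleton (h : ι → Bool) (hh : #{j | h j = true} = m) :
      Measure.pi (fun _ : ι => (bernoulli q hq).toMeasure) {h}
        = ((q ^ m * (1 - q) ^ (Fintype.card ι - m) : ℝ≥0) : ℝ≥0∞) := by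
    have hfalse : #{j | ¬ h j = true} = Fintype.card ι - m := by
      rw [filter_not, card_sdiff_of_subset (filter_subset _ _), card_univ, hh]
    have hcoord (i : ι) :
        (bernoulli q hq).toMeasure {h i} = ((if h i then q else 1 - q : ℝ≥0) : ℝ≥0∞) := by
      rw [PMF.toMeasure_apply_singleton _ _ (measurableSet_singleton _), bernoulli_apply]
      cases h i <;> simp [ENNReal.coe_sub]
    simp only [Measure.pi_singleton, hcoord, ← ENNReal.coe_finset_prod, prod_ite, prod_const, hh,
      hfalse]
  have hfinite : {h : ι → Bool | #{j | h j = true} = m}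
      = ↑({h | #{j | h j = true} = m} : Finset (ι → Bool)) := by simp
  rw [hfinite, ← sum_measure_singleton,
    sum_congr rfl fun h hh => hsingleton h (mem_filter.1 hh).2, sum_const,
    Fintype.card_filter_count_true_eq_choose, nsmul_eq_mul,
    ← ENNReal.coe_natCast, ← ENNReal.coe_mul, ← ENNReal.ofReal_coe_nnreal]
  congr 1
  push_cast [NNReal.coe_sub hq]
  ring

theorem Real.coe_one_sub_toNNReal {p : ℝ} (h0 : 0 ≤ p) (h1 : p ≤ 1) :
    ((1 - p.toNNReal : ℝ≥0) : ℝ) = 1 - p := by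
  rw [NNReal.coe_sub (Real.toNNReal_le_one.mpr h1), NNReal.coe_one, Real.coe_toNNReal _ h0]

theorem Real.one_sub_exp_neg_pow_mul_exp_neg_pow (l : ℝ) {m n : ℕ} (h : m ≤ n) :
    (1 - Real.exp (-l)) ^ m * Real.exp (-l) ^ (n - m)
      = Real.exp (-l * n) * (Real.exp l - 1) ^ m := by
  have hsplit : Real.exp (-l * n) = Real.exp (-l) ^ (n - m) * Real.exp (-l) ^ m := by
    rw [← pow_add, Nat.sub_add_cancel h, ← Real.exp_nat_mul, mul_comm]
  have hunit : (Real.exp l - 1) * Real.exp (-l) = 1 - Real.exp (-l) := by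
    rw [sub_mul, ← Real.exp_add, add_neg_cancel, Real.exp_zero, one_mul]
  rw [hsplit, ← hunit, mul_pow]
  ring

/-- For two independent stationary block bootstrap paths of length `N` with
parameters `p1, p2 ∈ (0,1]` and random decision sets `D1`, `D2`, the probability
that `|D1 ∪ D2| = k` (for `1 ≤ k ≤ N`) equals
`C(N-1, k-1) (1 - (1-p1)(1-p2))^(k-1) ((1-p1)(1-p2))^(N-k)`; equivalently, for
`p1, p2 < 1`, with `λᵢ = -log(1-pᵢ)`, it equals
`C(N-1, k-1) e^(-(λ1+λ2)(N-1)) (e^(λ1+λ2) - 1)^(k-1)`. -/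
theorem stmt6 {N : ℕ} [NeZero N] (p1 p2 : ℝ)
    (hp10 : 0 < p1) (hp11 : p1 ≤ 1) (hp20 : 0 < p2) (hp21 : p2 ≤ 1)
    (k : ℕ) (hk1 : 1 ≤ k) (hkN : k ≤ N) :
    ((Measure.pi (fun _ : Fin (N - 1) =>
        (PMF.bernoulli (Real.toNNReal p1) (Real.toNNReal_le_one.mpr hp11)).toMeasure)).prod
      (Measure.pi (fun _ : Fin (N - 1) =>
        (PMF.bernoulli (Real.toNNReal p2) (Real.toNNReal_le_one.mpr hp21)).toMeasure)))
      {d : (Fin (N - 1) → Bool) × (Fin (N - 1) → Bool) |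
        (decisionSet d.1 ∪ decisionSet d.2).card = k}
      = ENNReal.ofReal (((N - 1).choose (k - 1) : ℝ)
          * (1 - (1 - p1) * (1 - p2)) ^ (k - 1) * ((1 - p1) * (1 - p2)) ^ (N - k))
    ∧ (p1 < 1 → p2 < 1 →
        ((N - 1).choose (k - 1) : ℝ)
            * (1 - (1 - p1) * (1 - p2)) ^ (k - 1) * ((1 - p1) * (1 - p2)) ^ (N - k)
          = ((N - 1).choose (k - 1) : ℝ)
              * Real.exp (-((-Real.log (1 - p1)) + (-Real.log (1 - p2))) * ((N : ℝ) - 1))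
              * (Real.exp ((-Real.log (1 - p1)) + (-Real.log (1 - p2))) - 1) ^ (k - 1)) := by
  have hN : 1 ≤ N := NeZero.one_le
  have hNk : N - k = N - 1 - (k - 1) := by omega
  constructor
  · have hevent : {d : (Fin (N - 1) → Bool) × (Fin (N - 1) → Bool) |
          #(decisionSet d.1 ∪ decisionSet d.2) = k}
        = (fun d j => d.1 j || d.2 j) ⁻¹' {h | #{j | h j = true} = k - 1} := by
      ext d
      simp only [Set.mem_setOf_eq, Set.mem_preimage, decisionSet_union, card_decisionSet]
      omega
    rw [hevent, ← Measure.map_apply (by fun_prop) (.of_discrete),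
      Measure.pi_prod_pi_map_zipWith _ _ (f := (· || ·)) (by fun_prop)]
    simp only [PMF.bernoulli_prod_map_or]
    have hmul : (1 - p1.toNNReal) * (1 - p2.toNNReal) ≤ 1 := mul_le_one' tsub_le_self tsub_le_self
    have hq : ((1 - (1 - p1.toNNReal) * (1 - p2.toNNReal) : ℝ≥0) : ℝ)
        = 1 - (1 - p1) * (1 - p2) := by
      rw [NNReal.coe_sub hmul, NNReal.coe_one, NNReal.coe_mul,
        Real.coe_one_sub_toNNReal hp10.le hp11, Real.coe_one_sub_toNNReal hp20.le hp21]
    rw [PMF.pi_bernoulli_card_filter_eq, Fintype.card_fin, hq, sub_sub_cancel, hNk]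
  · intro hp1 hp2
    have hexp : Real.exp (-(-Real.log (1 - p1) + -Real.log (1 - p2))) = (1 - p1) * (1 - p2) := by
      rw [neg_add, neg_neg, neg_neg, Real.exp_add, Real.exp_log (by linarith),
        Real.exp_log (by linarith)]
    rw [← hexp, hNk, mul_assoc,
      Real.one_sub_exp_neg_pow_mul_exp_neg_pow _ (Nat.sub_le_sub_right hkN 1), Nat.cast_pred hN,
      mul_assoc]
end
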